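/- Let J ⊆ ℕ, let (X_i, d̃_i), i ∈ J, be metric spaces with each d̃_i bounded by 1, let G_i be a group acting on X_i by homeomorphisms, and equip X = ∏_{i∈J} X_i with the product metric d(x, y) = Σ_{i∈J} 2^{-i} d̃_i(x_i, y_i). Assume every G_i is chaotic on X_i, and assume there exists n ∈ J such that (X_n, d̃_n) is a locally compact metric space that is a Baire space. Then the direct product group G = ∏_{i∈J} G_i, acting canonically on X, is chaotic on X and sensitive to initial conditions on (X, d). -/

import Mathlib

/-!
Density of orbits, closedness of orbits and density of sets all factor through the product
topology, so chaoticity passes to products coordinatewise, and sensitivity of the product action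
is inherited from a single factor `n`, through the weight `2^{-n}` of that coordinate.

On a locally compact factor, sensitivity follows from chaoticity. If it failed, then for every
`ε` some nonempty open `U` would have all its translates of diameter `< ε`. Then `U` contains a
point `u` of the dense orbit and a point `q` with closed orbit, `g • u` and `g • q` stay
`ε`-close, and hence the orbit of `q` is `ε`-dense. Approximating any point `z` by `g • u` and
extracting a convergent subsequence of `g • q` in a compact ball around `z` yields a point of the
orbit of `q` whose orbit `ε`-shadows that of `z`, so the orbit of `z` is `2ε`-dense. Thus every
orbit is dense; a closed one is everything, contradicting the existence of a non-closed dense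
orbit.
-/

open Pointwise

/-- The diameter (in `ℝ≥0∞`) of a set `S` with respect to a distance function `d`. -/
noncomputable def ediamD {X : Type*} (d : X → X → ℝ) (S : Set X) : ENNReal :=
  ⨆ (y : S) (z : S), ENNReal.ofReal (d y.1 z.1)

/-- `G` is sensitive to initial conditions with respect to the distance function `d`. -/
def SensitiveOn (G : Type*) {X : Type*} [Group G] [MulAction G X] [TopologicalSpace X]
    (d : X → X → ℝ) : Prop :=
  ∃ δ : ℝ, 0 < δ ∧ ∀ U : Set X, IsOpen U → U.Nonempty →
    ∃ g : G, ENNReal.ofReal δ ≤ ediamD d (g • U)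

/-- `G` is chaotic on `X`: it has a dense non-closed orbit and the union of its
closed orbits is dense. -/
def Chaotic (G X : Type*) [Group G] [MulAction G X] [TopologicalSpace X] : Prop :=
  (∃ x : X, Dense (MulAction.orbit G x) ∧ ¬ IsClosed (MulAction.orbit G x)) ∧
  Dense (⋃ x ∈ {y : X | IsClosed (MulAction.orbit G y)}, MulAction.orbit G x)

open MulAction Metric Set Filter Topology

theorem MulAction.orbit_pi {ι : Type*} {G X : ι → Type*} [∀ i, Monoid (G i)]
    [∀ i, MulAction (G i) (X i)] (x : ∀ i, X i) :
    orbit (∀ i, G i) x = univ.pi fun i => orbit (G i) (x i) := by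
  ext y
  refine ⟨?_, fun hy => ?_⟩
  · rintro ⟨g, rfl⟩ i -
    exact ⟨g i, rfl⟩
  · choose g hg using fun i => hy i (mem_univ i)
    exact ⟨g, funext hg⟩

theorem chaotic_iff {G X : Type*} [Group G] [MulAction G X] [TopologicalSpace X] :
    Chaotic G X ↔ (∃ x : X, Dense (orbit G x) ∧ ¬ IsClosed (orbit G x)) ∧
      Dense {y : X | IsClosed (orbit G y)} := by
  have hunion : ⋃ x ∈ {y : X | IsClosed (orbit G y)}, orbit G x =
      {y : X | IsClosed (orbit G y)} := by
    ext y
    simp only [mem_iUnion, mem_ofPred_eq, exists_prop]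
    exact ⟨fun ⟨x, hx, hyx⟩ => orbit_eq_iff.2 hyx ▸ hx, fun hy => ⟨y, hy, mem_orbit_self y⟩⟩
  rw [Chaotic, hunion]

theorem isClosed_univ_pi_iff {ι : Type*} {X : ι → Type*} [∀ i, TopologicalSpace (X i)]
    {s : ∀ i, Set (X i)} (hs : ∀ i, (s i).Nonempty) :
    IsClosed (univ.pi s) ↔ ∀ i, IsClosed (s i) := by
  refine ⟨fun h i => ?_, fun h => isClosed_set_pi fun i _ => h i⟩
  rw [← closure_subset_iff_isClosed, closure_pi_set, univ_pi_subset_univ_pi_iff] at h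
  rw [← closure_subset_iff_isClosed]
  obtain h | ⟨j, hj⟩ := h
  · exact h i
  · exact absurd hj (hs j).closure.ne_empty

theorem Chaotic.pi {ι : Type*} [Nonempty ι] {G X : ι → Type*} [∀ i, Group (G i)]
    [∀ i, MulAction (G i) (X i)] [∀ i, TopologicalSpace (X i)]
    (h : ∀ i, Chaotic (G i) (X i)) : Chaotic (∀ i, G i) (∀ i, X i) := by
  simp only [chaotic_iff] at h ⊢
  choose x hdense hnotClosed using fun i => (h i).1
  refine ⟨⟨x, ?_, ?_⟩, ?_⟩
  · rw [orbit_pi]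
    exact dense_pi univ fun i _ => hdense i
  · rw [orbit_pi, isClosed_univ_pi_iff fun i => nonempty_orbit (x i)]
    exact fun hclosed => hnotClosed (Classical.arbitrary ι) (hclosed _)
  · refine (dense_pi univ fun i _ => (h i).2).mono fun y hy => ?_
    rw [mem_ofPred_eq, orbit_pi]
    exact isClosed_set_pi hy

section Sensitivity

variable {H Y : Type*} [Group H] [MulAction H Y] [PseudoMetricSpace Y]

theorem MulAction.orbit_subset_cthickening_orbit {ε : ℝ} {a b : Y}
    (hab : ∀ g : H, dist (g • a) (g • b) ≤ ε) :
    orbit H a ⊆ cthickening ε (orbit H b) := by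
  rintro _ ⟨g, rfl⟩
  exact mem_cthickening_of_dist_le _ _ _ _ (mem_orbit b g) (hab g)

theorem MulAction.exists_mem_orbit_forall_dist_smul_le (hc : ∀ g : H, Continuous (g • · : Y → Y))
    {u q z : Y} {ε ρ : ℝ} (hK : IsCompact (closedBall z ρ)) (hερ : ε < ρ)
    (hu : Dense (orbit H u)) (hq : IsClosed (orbit H q))
    (huq : ∀ g : H, dist (g • u) (g • q) ≤ ε) :
    ∃ p ∈ orbit H q, ∀ g : H, dist (g • z) (g • p) ≤ ε := by
  obtain ⟨y, hy, hyz⟩ := mem_closure_iff_seq_limit.1 (hu.closure_eq ▸ mem_univ z)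
  choose β hβ using hy
  replace hyz : Tendsto (fun m => β m • u) atTop (𝓝 z) := by simpa only [hβ] using hyz
  have hnear : ∀ᶠ m in atTop, β m • q ∈ closedBall z ρ := by
    filter_upwards [hyz.eventually (ball_mem_nhds z (sub_pos.2 hερ))] with m hm
    calc dist (β m • q) z ≤ dist (β m • q) (β m • u) + dist (β m • u) z := dist_triangle _ _ _
      _ ≤ ε + (ρ - ε) := add_le_add (dist_comm (β m • u) _ ▸ huq _) (mem_ball.1 hm).le
      _ = ρ := add_sub_cancel _ _
  obtain ⟨p, -, φ, hφ, hp⟩ := hK.tendsto_subseq' hnear.frequently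
  refine ⟨p, hq.mem_of_tendsto hp (Eventually.of_forall fun m => mem_orbit q _), fun g => ?_⟩
  refine le_of_tendsto' ((((hc g).tendsto z).comp (hyz.comp hφ.tendsto_atTop)).dist
    (((hc g).tendsto p).comp hp)) fun m => ?_
  simpa only [Function.comp_apply, smul_smul] using huq (g * β (φ m))

theorem MulAction.dense_orbit_of_not_sensitive [WeaklyLocallyCompactSpace Y]
    (hc : ∀ g : H, Continuous (g • · : Y → Y)) {x₀ : Y} (hx₀ : Dense (orbit H x₀))
    (hclosed : Dense {y : Y | IsClosed (orbit H y)})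
    (hU : ∀ ε > 0, ∃ U : Set Y, IsOpen U ∧ U.Nonempty ∧
      ∀ g : H, ∀ u ∈ U, ∀ v ∈ U, dist (g • u) (g • v) < ε)
    (z : Y) : Dense (orbit H z) := by
  obtain ⟨ρ, hρ, hK⟩ := exists_isCompact_closedBall (α := Y) z
  refine dense_iff_closure_eq.2 (eq_univ_of_univ_subset ?_)
  rw [closure_eq_iInter_cthickening]
  refine subset_iInter₂ fun δ hδ => ?_
  set ε := min (δ / 2) (ρ / 2)
  have hε : 0 < ε := by positivity
  obtain ⟨U, hUo, hUne, hUsmall⟩ := hU ε hε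
  obtain ⟨u, ⟨γ, rfl⟩, huU⟩ := hx₀.exists_mem_open hUo hUne
  obtain ⟨q, hq, hqU⟩ := hclosed.exists_mem_open hUo hUne
  have hu : Dense (orbit H (γ • x₀)) := orbit_smul γ x₀ ▸ hx₀
  have huq (g : H) : dist (g • γ • x₀) (g • q) ≤ ε := (hUsmall g _ huU q hqU).le
  obtain ⟨p, hp, hpz⟩ := exists_mem_orbit_forall_dist_smul_le hc hK
    (by linarith [min_le_right (δ / 2) (ρ / 2)]) hu hq huq
  have hq_dense : cthickening ε (orbit H q) = univ :=
    eq_univ_of_univ_subset <| hu.closure_eq ▸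
      closure_minimal (orbit_subset_cthickening_orbit huq) isClosed_cthickening
  have hpz' : orbit H p ⊆ cthickening ε (orbit H z) :=
    orbit_subset_cthickening_orbit fun g => dist_comm (g • z) (g • p) ▸ hpz g
  calc univ = cthickening ε (orbit H p) := by rw [orbit_eq_iff.2 hp, hq_dense]
    _ ⊆ cthickening ε (cthickening ε (orbit H z)) := cthickening_subset_of_subset ε hpz'
    _ ⊆ cthickening (ε + ε) (orbit H z) := cthickening_cthickening_subset hε.le hε.le _
    _ ⊆ cthickening δ (orbit H z) :=
      cthickening_mono (by linarith [min_le_left (δ / 2) (ρ / 2)]) _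

theorem Chaotic.exists_le_dist_smul [WeaklyLocallyCompactSpace Y]
    (hc : ∀ g : H, Continuous (g • · : Y → Y)) (h : Chaotic H Y) :
    ∃ δ > 0, ∀ U : Set Y, IsOpen U → U.Nonempty →
      ∃ g : H, ∃ u ∈ U, ∃ v ∈ U, δ ≤ dist (g • u) (g • v) := by
  obtain ⟨⟨x₀, hx₀, hnotClosed⟩, hclosed⟩ := chaotic_iff.1 h
  by_contra! hU
  obtain ⟨z, hz⟩ := hclosed.nonempty_iff.2 ⟨x₀⟩
  have hz_univ : orbit H z = univ := by
    rw [← hz.closure_eq, (dense_orbit_of_not_sensitive hc hx₀ hclosed hU z).closure_eq]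
  exact hnotClosed (orbit_eq_iff.2 (hz_univ ▸ mem_univ x₀) ▸ hz)

end Sensitivity

theorem ofReal_le_ediamD {X : Type*} {d : X → X → ℝ} {S : Set X} {x y : X} (hx : x ∈ S)
    (hy : y ∈ S) : ENNReal.ofReal (d x y) ≤ ediamD d S :=
  le_iSup₂_of_le (f := fun (x y : S) => ENNReal.ofReal (d x y)) ⟨x, hx⟩ ⟨y, hy⟩ le_rfl

theorem sensitiveOn_pi {ι : Type*} {G X : ι → Type*} [∀ i, Group (G i)]
    [∀ i, MulAction (G i) (X i)] [∀ i, PseudoMetricSpace (X i)] (d : (∀ i, X i) → (∀ i, X i) → ℝ)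
    (n : ι) {c : ℝ} (hc : 0 < c) (hd : ∀ x y, c * dist (x n) (y n) ≤ d x y)
    (hn : ∃ δ > 0, ∀ U : Set (X n), IsOpen U → U.Nonempty →
      ∃ g : G n, ∃ u ∈ U, ∃ v ∈ U, δ ≤ dist (g • u) (g • v)) :
    SensitiveOn (∀ i, G i) d := by
  classical
  obtain ⟨δ, hδ, hsens⟩ := hn
  refine ⟨c * δ, mul_pos hc hδ, fun U hU hUne => ?_⟩
  obtain ⟨g, _, ⟨u, hu, rfl⟩, _, ⟨v, hv, rfl⟩, hle⟩ :=
    hsens _ (isOpenMap_eval n U hU) (hUne.image _)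
  refine ⟨Pi.mulSingle n g, le_trans (ENNReal.ofReal_le_ofReal ?_)
    (ofReal_le_ediamD (smul_mem_smul_set hu) (smul_mem_smul_set hv))⟩
  calc c * δ ≤ c * dist (g • u n) (g • v n) := mul_le_mul_of_nonneg_left hle hc.le
    _ ≤ d (Pi.mulSingle n g • u) (Pi.mulSingle n g • v) := by
      simpa only [Pi.smul_apply', Pi.mulSingle_eq_same] using
        hd (Pi.mulSingle n g • u) (Pi.mulSingle n g • v)

theorem mul_dist_le_tsum_mul_dist {ι : Type*} {X : ι → Type*} [∀ i, PseudoMetricSpace (X i)]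
    {w : ι → ℝ} (hw₀ : ∀ i, 0 ≤ w i) (hw : Summable w) (hbdd : ∀ i (x y : X i), dist x y ≤ 1)
    (x y : ∀ i, X i) (n : ι) : w n * dist (x n) (y n) ≤ ∑' i, w i * dist (x i) (y i) :=
  (hw.of_nonneg_of_le (fun i => mul_nonneg (hw₀ i) dist_nonneg)
    fun i => mul_le_of_le_one_right (hw₀ i) (hbdd i _ _)).le_tsum n
    fun i _ => mul_nonneg (hw₀ i) dist_nonneg

theorem product_chaotic_and_sensitive_general {X G : ℕ → Type*}
    [∀ i, MetricSpace (X i)] [∀ i, Group (G i)] [∀ i, MulAction (G i) (X i)]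
    (J : Set ℕ)
    (hbdd : ∀ (i : J) (x y : X i), dist x y ≤ 1)
    (hcont : ∀ (i : J) (g : G i), Continuous fun x : X i => g • x)
    (d : (∀ i : J, X i) → (∀ i : J, X i) → ℝ)
    (hd : ∀ x y, d x y = ∑' i : J, (1 / 2 : ℝ) ^ (i : ℕ) * dist (x i) (y i))
    (hchaos : ∀ i : J, Chaotic (G i) (X i))
    (n : J) (hLC : LocallyCompactSpace (X n)) :
    Chaotic (∀ i : J, G i) (∀ i : J, X i) ∧ SensitiveOn (∀ i : J, G i) d := by
  have : Nonempty J := ⟨n⟩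
  have hweight (x y : ∀ i : J, X i) : (1 / 2 : ℝ) ^ (n : ℕ) * dist (x n) (y n) ≤ d x y :=
    hd x y ▸ mul_dist_le_tsum_mul_dist (fun _ => pow_nonneg one_half_pos.le _)
      (summable_geometric_two.subtype J) hbdd x y n
  exact ⟨Chaotic.pi hchaos,
    sensitiveOn_pi d n (by positivity) hweight ((hchaos n).exists_le_dist_smul (hcont n))⟩

/-- Let `J ⊆ ℕ`, let `(X_i, dist)` be metric spaces with metrics bounded by `1`, acted on
chaotically by homeomorphisms by groups `G_i`, and let `X = ∏_{i ∈ J} X_i` carry the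
product metric `d`. If for some `n ∈ J` the space `(X_n, dist)` is a locally compact
metric Baire space, then the direct product group `G = ∏_{i ∈ J} G_i`, acting canonically
on `X`, is chaotic on `X` and sensitive to initial conditions on `(X, d)`. -/
theorem product_chaotic_and_sensitive {X G : ℕ → Type*}
    [∀ i, MetricSpace (X i)] [∀ i, Group (G i)] [∀ i, MulAction (G i) (X i)]
    (J : Set ℕ)
    (hbdd : ∀ (i : J) (x y : X i), dist x y ≤ 1)
    (hcont : ∀ (i : J) (g : G i), Continuous fun x : X i => g • x)
    (d : (∀ i : J, X i) → (∀ i : J, X i) → ℝ)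
    (hd : ∀ x y, d x y = ∑' i : J, (1 / 2 : ℝ) ^ (i : ℕ) * dist (x i) (y i))
    (hchaos : ∀ i : J, Chaotic (G i) (X i))
    (n : J) (hLC : LocallyCompactSpace (X n)) (hBaire : BaireSpace (X n)) :
    Chaotic (∀ i : J, G i) (∀ i : J, X i) ∧ SensitiveOn (∀ i : J, G i) d :=
  product_chaotic_and_sensitive_general J hbdd hcont d hd hchaos n hLC
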